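/- arXiv:2409.13797 — 3 statements merged into one kernel-verified Lean document; each statement's English description precedes it below -/
import Mathlib

section
/- Let ξ and ξ' be independent standard Gaussian random variables, c ∈ [-1,1], and c' = \sqrt{1-c^2}. Then for every n, the conditional expectation of H_n(cξ + c'ξ') given ξ' equals (c')^n H_n(ξ') almost surely. -/
open MeasureTheory ProbabilityTheory Polynomial Real
open scoped ENNReal NNReal

/-- The probabilist's Hermite polynomial `H_n` evaluated at a real point. -/
noncomputable def hermiteR (n : ℕ) (x : ℝ) : ℝ :=
  Polynomial.aeval x (Polynomial.hermite n)

lemma hermite_derivative (n : ℕ) :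
    (Polynomial.hermite (n+1)).derivative = (n+1 : ℕ) • Polynomial.hermite n := by
  induction n with
  | zero => simp [Polynomial.hermite_succ, Polynomial.hermite_zero]
  | succ n ih =>
    rw [Polynomial.hermite_succ (n+1), derivative_sub, derivative_mul, derivative_X, one_mul, ih]
    rw [Polynomial.hermite_succ n]
    simp only [derivative_smul, smul_sub]
    push_cast
    ring_nf

lemma hermiteR_zero (x : ℝ) : hermiteR 0 x = 1 := by simp [hermiteR]

lemma hermiteR_one (x : ℝ) : hermiteR 1 x = x := by simp [hermiteR, Polynomial.hermite_one]

lemma hermiteR_succ_succ (n : ℕ) (x : ℝ) :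
    hermiteR (n+2) x = x * hermiteR (n+1) x - (n+1 : ℝ) * hermiteR n x := by
  simp only [hermiteR, Polynomial.hermite_succ (n+1), map_sub, map_mul, Polynomial.aeval_X,
    hermite_derivative n, map_nsmul]
  push_cast
  ring

/-- polynomial times gaussian weight is integrable -/
lemma integrable_poly_mul_gauss (P : Polynomial ℝ) :
    Integrable (fun x : ℝ => P.eval x * Real.exp (-(x^2)/2)) := by
  induction P using Polynomial.induction_on' with
  | add p q hp hq =>
      simp only [Polynomial.eval_add, add_mul]; exact hp.add hq
  | monomial n a =>
      simp only [Polynomial.eval_monomial]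
      have h : Integrable (fun x : ℝ => x ^ (n:ℝ) * Real.exp (-(1/2) * x ^ 2)) :=
        integrable_rpow_mul_exp_neg_mul_sq (by norm_num)
          (lt_of_lt_of_le neg_one_lt_zero (Nat.cast_nonneg n))
      have h2 : Integrable (fun x : ℝ => |x ^ (n:ℝ) * Real.exp (-(1/2) * x ^ 2)|) := h.abs
      have : Integrable (fun x : ℝ => x ^ n * Real.exp (-(x^2)/2)) := by
        refine h2.mono' ?_ ?_
        · exact ((continuous_pow n).mul (by continuity)).aestronglyMeasurable
        · filter_upwards with x
          have earg : -(x^2)/2 = -(1/2) * x^2 := by ring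
          rw [earg, Real.norm_eq_abs, Real.rpow_natCast]
      simpa [mul_assoc] using this.const_mul a



lemma stein (P : Polynomial ℝ) :
    ∫ x : ℝ, x * P.eval x * Real.exp (-(x^2)/2)
      = ∫ x : ℝ, P.derivative.eval x * Real.exp (-(x^2)/2) := by
  have hd : ∀ x : ℝ, HasDerivAt (fun x => P.eval x * Real.exp (-(x^2)/2))
      (P.derivative.eval x * Real.exp (-(x^2)/2) - x * P.eval x * Real.exp (-(x^2)/2)) x := by
    intro x
    have h1 : HasDerivAt (fun x : ℝ => P.eval x) (P.derivative.eval x) x := P.hasDerivAt x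
    have h2 : HasDerivAt (fun x : ℝ => -(x^2)/2) (-x) x := by
      have h := (hasDerivAt_pow 2 x).neg.div_const 2
      refine h.congr_deriv ?_
      push_cast
      ring
    have h3 := h2.exp
    have h4 := h1.mul h3
    refine h4.congr_deriv ?_
    ring
  have heq : (fun x : ℝ => P.derivative.eval x * Real.exp (-(x^2)/2)
        - x * P.eval x * Real.exp (-(x^2)/2))
      = fun x => (P.derivative - Polynomial.X * P).eval x * Real.exp (-(x^2)/2) := by
    funext x; simp; ring
  have hint : Integrable (fun x : ℝ => P.derivative.eval x * Real.exp (-(x^2)/2)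
      - x * P.eval x * Real.exp (-(x^2)/2)) := by
    rw [heq]; exact integrable_poly_mul_gauss _
  have h0 := integral_eq_zero_of_hasDerivAt_of_integrable hd hint (integrable_poly_mul_gauss P)
  have hi1 : Integrable (fun x : ℝ => P.derivative.eval x * Real.exp (-(x^2)/2)) :=
    integrable_poly_mul_gauss _
  have hi2 : Integrable (fun x : ℝ => x * P.eval x * Real.exp (-(x^2)/2)) := by
    have : (fun x : ℝ => x * P.eval x * Real.exp (-(x^2)/2))
        = fun x => (Polynomial.X * P).eval x * Real.exp (-(x^2)/2) := by funext x; simp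
    rw [this]; exact integrable_poly_mul_gauss _
  rw [integral_sub hi1 hi2] at h0
  linarith

noncomputable def compP (m : ℕ) (c a : ℝ) : Polynomial ℝ :=
  ((Polynomial.hermite m).map (algebraMap ℤ ℝ)).comp (Polynomial.C c * Polynomial.X + Polynomial.C a)

lemma compP_eval (m : ℕ) (c a x : ℝ) : (compP m c a).eval x = hermiteR m (c * x + a) := by
  rw [compP, Polynomial.eval_comp]
  simp only [Polynomial.eval_add, Polynomial.eval_mul, Polynomial.eval_C, Polynomial.eval_X]
  rw [hermiteR, Polynomial.aeval_def, Polynomial.eval₂_eq_eval_map]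


lemma compP_deriv_eval (m : ℕ) (c a x : ℝ) :
    (compP (m+1) c a).derivative.eval x = (m+1 : ℝ) * c * hermiteR m (c * x + a) := by
  have hmap : ((Polynomial.hermite (m+1)).map (algebraMap ℤ ℝ)).derivative
      = (m+1 : ℕ) • ((Polynomial.hermite m).map (algebraMap ℤ ℝ)) := by
    rw [Polynomial.derivative_map, hermite_derivative]
    simp
  rw [compP, Polynomial.derivative_comp, hmap]
  have := compP_eval m c a x
  rw [compP] at this
  simp only [Polynomial.eval_mul, Polynomial.eval_add, Polynomial.eval_smul,
    Polynomial.eval_comp, Polynomial.eval_C, Polynomial.eval_X, Polynomial.derivative_add,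
    Polynomial.derivative_mul, Polynomial.derivative_C, Polynomial.derivative_X,
    Polynomial.eval_comp] at *
  rw [this]
  simp only [Polynomial.eval_zero, Polynomial.eval_one, smul_eq_mul]
  push_cast
  ring



lemma integrable_gauss : Integrable (fun x : ℝ => Real.exp (-(x^2)/2)) := by
  simpa using integrable_poly_mul_gauss 1

lemma integrable_hermiteR_mul_gauss (m : ℕ) (c a : ℝ) :
    Integrable (fun x : ℝ => hermiteR m (c * x + a) * Real.exp (-(x^2)/2)) := by
  simpa only [compP_eval] using integrable_poly_mul_gauss (compP m c a)

lemma integrable_mul_hermiteR_mul_gauss (m : ℕ) (c a : ℝ) :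
    Integrable (fun x : ℝ => x * hermiteR m (c * x + a) * Real.exp (-(x^2)/2)) := by
  have := integrable_poly_mul_gauss (Polynomial.X * compP m c a)
  simpa only [Polynomial.eval_mul, Polynomial.eval_X, compP_eval] using this

lemma integral_mul_gauss_zero : ∫ x : ℝ, x * Real.exp (-(x^2)/2) = 0 := by
  have := stein 1
  simpa using this

lemma key (c c' : ℝ) (h : c^2 + c'^2 = 1) (n : ℕ) (y : ℝ) :
    ∫ x : ℝ, hermiteR n (c*x + c'*y) * Real.exp (-(x^2)/2)
      = c'^n * hermiteR n y * ∫ x : ℝ, Real.exp (-(x^2)/2) := by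
  set I := ∫ x : ℝ, Real.exp (-(x^2)/2) with hI
  suffices H : ∀ m : ℕ, (∀ z : ℝ,
      ∫ x : ℝ, hermiteR m (c*x + c'*z) * Real.exp (-(x^2)/2) = c'^m * hermiteR m z * I) ∧
      (∀ z : ℝ,
      ∫ x : ℝ, hermiteR (m+1) (c*x + c'*z) * Real.exp (-(x^2)/2)
        = c'^(m+1) * hermiteR (m+1) z * I) from (H n).1 y
  intro m
  induction m with
  | zero =>
    constructor
    · intro z
      simp [hermiteR_zero, hI]
    · intro z
      have hsplit : (fun x : ℝ => hermiteR 1 (c*x + c'*z) * Real.exp (-(x^2)/2))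
          = fun x : ℝ => c * (x * Real.exp (-(x^2)/2)) + (c'*z) * Real.exp (-(x^2)/2) := by
        funext x; rw [hermiteR_one]; ring
      have ix : Integrable (fun x : ℝ => c * (x * Real.exp (-(x^2)/2))) := by
        have := (integrable_poly_mul_gauss Polynomial.X).const_mul c
        simpa using this
      rw [hsplit, integral_add ix (integrable_gauss.const_mul (c'*z)),
        integral_const_mul, integral_const_mul, integral_mul_gauss_zero, hermiteR_one]
      ring
  | succ m ih =>
    obtain ⟨ihm, ihm1⟩ := ih
    refine ⟨ihm1, fun z => ?_⟩
    have hA : ∫ x : ℝ, x * hermiteR (m+1) (c*x + c'*z) * Real.exp (-(x^2)/2)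
        = (m+1 : ℝ) * c * (c'^m * hermiteR m z * I) := by
      have h1 := stein (compP (m+1) c (c'*z))
      simp only [compP_eval, compP_deriv_eval] at h1
      rw [h1]
      have h2 : (fun x : ℝ => (m+1:ℝ) * c * hermiteR m (c*x + c'*z) * Real.exp (-(x^2)/2))
          = fun x : ℝ => ((m+1:ℝ) * c) * (hermiteR m (c*x + c'*z) * Real.exp (-(x^2)/2)) := by
        funext x; ring
      rw [h2, integral_const_mul, ihm z]
    have hsplit : (fun x : ℝ => hermiteR (m+2) (c*x + c'*z) * Real.exp (-(x^2)/2))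
        = fun x : ℝ => (c * (x * hermiteR (m+1) (c*x + c'*z) * Real.exp (-(x^2)/2))
            + (c'*z) * (hermiteR (m+1) (c*x + c'*z) * Real.exp (-(x^2)/2)))
            - ((m+1:ℝ)) * (hermiteR m (c*x + c'*z) * Real.exp (-(x^2)/2)) := by
      funext x; rw [hermiteR_succ_succ]; ring
    have i1 := integrable_mul_hermiteR_mul_gauss (m+1) c (c'*z)
    have i2 := integrable_hermiteR_mul_gauss (m+1) c (c'*z)
    have i3 := integrable_hermiteR_mul_gauss m c (c'*z)
    have j1 : Integrable (fun x : ℝ => c * (x * hermiteR (m+1) (c*x + c'*z) * Real.exp (-(x^2)/2))) :=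
      i1.const_mul c
    have j2 : Integrable (fun x : ℝ => (c'*z) * (hermiteR (m+1) (c*x + c'*z) * Real.exp (-(x^2)/2))) :=
      i2.const_mul (c'*z)
    have j3 : Integrable (fun x : ℝ => ((m:ℝ)+1) * (hermiteR m (c*x + c'*z) * Real.exp (-(x^2)/2))) :=
      i3.const_mul _
    have j12 : Integrable (fun x : ℝ => c * (x * hermiteR (m+1) (c*x + c'*z) * Real.exp (-(x^2)/2))
        + (c'*z) * (hermiteR (m+1) (c*x + c'*z) * Real.exp (-(x^2)/2))) := j1.add j2
    rw [hsplit, integral_sub j12 j3, integral_add j1 j2,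
      integral_const_mul, integral_const_mul, integral_const_mul, hA, ihm1 z, ihm z,
      hermiteR_succ_succ]
    linear_combination (((m:ℝ)+1) * c'^m * hermiteR m z * I) * h



lemma integral_gaussianReal_eq (f : ℝ → ℝ) :
    ∫ x, f x ∂(gaussianReal 0 1) = ∫ x, gaussianPDFReal 0 1 x * f x := by
  rw [gaussianReal_of_var_ne_zero 0 one_ne_zero]
  have hmeas : Measurable (fun x => (gaussianPDFReal 0 1 x).toNNReal) :=
    (measurable_gaussianPDFReal 0 1).real_toNNReal
  have hcoe : (gaussianPDF 0 1) = fun x => ((gaussianPDFReal 0 1 x).toNNReal : ℝ≥0∞) := by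
    funext x; rw [gaussianPDF]; rfl
  rw [hcoe, integral_withDensity_eq_integral_smul hmeas]
  congr 1
  funext x
  rw [NNReal.smul_def, Real.coe_toNNReal _ (gaussianPDFReal_nonneg 0 1 x), smul_eq_mul]

lemma gaussianPDFReal_zero_one (x : ℝ) :
    gaussianPDFReal 0 1 x = (Real.sqrt (2*π))⁻¹ * Real.exp (-(x^2)/2) := by
  rw [gaussianPDFReal]
  norm_num

lemma integral_gauss_eq : ∫ x : ℝ, Real.exp (-(x^2)/2) = Real.sqrt (2*π) := by
  have h := integral_gaussian (1/2)
  have : (fun x : ℝ => Real.exp (-(x^2)/2)) = fun x : ℝ => Real.exp (-(1/2) * x^2) := by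
    funext x; ring_nf
  rw [this, h]
  congr 1
  ring

lemma keyγ (c c' : ℝ) (h : c^2 + c'^2 = 1) (n : ℕ) (y : ℝ) :
    ∫ x, hermiteR n (c*x + c'*y) ∂(gaussianReal 0 1) = c'^n * hermiteR n y := by
  rw [integral_gaussianReal_eq]
  have : (fun x => gaussianPDFReal 0 1 x * hermiteR n (c*x + c'*y))
      = fun x => (Real.sqrt (2*π))⁻¹ * (hermiteR n (c*x + c'*y) * Real.exp (-(x^2)/2)) := by
    funext x; rw [gaussianPDFReal_zero_one]; ring
  rw [this, integral_const_mul, key c c' h n y, integral_gauss_eq]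
  have hpos : (0:ℝ) < Real.sqrt (2*π) := Real.sqrt_pos.mpr (by positivity)
  field_simp




lemma gaussianPDFReal_zero_one' (x : ℝ) :
    gaussianPDFReal 0 1 x = (Real.sqrt (2*π))⁻¹ * Real.exp (-(x^2)/2) := by
  rw [gaussianPDFReal]; norm_num

/-- polynomials are integrable w.r.t. the standard Gaussian measure -/
lemma integrable_poly_gaussianReal (P : Polynomial ℝ) :
    Integrable (fun x : ℝ => P.eval x) (gaussianReal 0 1) := by
  rw [gaussianReal_of_var_ne_zero 0 one_ne_zero]
  have hmeas : Measurable (fun x => (gaussianPDFReal 0 1 x).toNNReal) :=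
    (measurable_gaussianPDFReal 0 1).real_toNNReal
  have hcoe : (gaussianPDF 0 1) = fun x => ((gaussianPDFReal 0 1 x).toNNReal : ℝ≥0∞) := by
    funext x; rw [gaussianPDF]; rfl
  rw [hcoe, integrable_withDensity_iff_integrable_smul hmeas]
  have : (fun x : ℝ => (gaussianPDFReal 0 1 x).toNNReal • P.eval x)
      = fun x : ℝ => (Real.sqrt (2*π))⁻¹ * (P.eval x * Real.exp (-(x^2)/2)) := by
    funext x
    rw [NNReal.smul_def, Real.coe_toNNReal _ (gaussianPDFReal_nonneg 0 1 x), smul_eq_mul,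
      gaussianPDFReal_zero_one']
    ring
  rw [this]
  exact (integrable_poly_mul_gauss P).const_mul _

lemma integrable_pow_gaussianReal (j : ℕ) :
    Integrable (fun x : ℝ => x ^ j) (gaussianReal 0 1) := by
  have := integrable_poly_gaussianReal (Polynomial.X ^ j)
  simpa only [Polynomial.eval_pow, Polynomial.eval_X] using this

lemma hermiteR_continuous (n : ℕ) : Continuous (hermiteR n) := by
  exact (Polynomial.hermite n).continuous_aeval

lemma integrable_hermiteR_prod (n : ℕ) (c c' : ℝ) :
    Integrable (fun p : ℝ × ℝ => hermiteR n (c*p.1 + c'*p.2))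
      ((gaussianReal 0 1).prod (gaussianReal 0 1)) := by
  have hrw : (fun p : ℝ × ℝ => hermiteR n (c*p.1 + c'*p.2))
      = fun p => ∑ k ∈ Finset.range (n+1), ∑ j ∈ Finset.range (k+1),
          ((((Polynomial.hermite n).coeff k : ℝ) * (k.choose j) * c^j * c'^(k-j))
            * (p.1^j * p.2^(k-j))) := by
    funext p
    rw [hermiteR, Polynomial.aeval_eq_sum_range, Polynomial.natDegree_hermite]
    refine Finset.sum_congr rfl fun k _ => ?_
    rw [add_pow, Finset.smul_sum]
    refine Finset.sum_congr rfl fun j _ => ?_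
    rw [zsmul_eq_mul, mul_pow, mul_pow]
    push_cast
    ring
  rw [hrw]
  apply integrable_finset_sum
  intro k _
  apply integrable_finset_sum
  intro j _
  exact ((integrable_pow_gaussianReal j).mul_prod (integrable_pow_gaussianReal (k-j))).const_mul _

lemma integrable_hermiteR_gaussianReal (n : ℕ) :
    Integrable (fun y : ℝ => hermiteR n y) (gaussianReal 0 1) := by
  have := integrable_poly_gaussianReal ((Polynomial.hermite n).map (algebraMap ℤ ℝ))
  refine this.congr (Filter.Eventually.of_forall fun y => ?_)
  show Polynomial.eval y _ = Polynomial.aeval y _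
  rw [Polynomial.aeval_def, Polynomial.eval₂_eq_eval_map]

set_option maxHeartbeats 1000000 in
/-- For independent standard Gaussians `ξ, ξ'`, `c ∈ [-1,1]`, `c' = √(1-c²)`:
`E[Hₙ(cξ + c'ξ') | ξ'] = (c')ⁿ Hₙ(ξ')` a.s. -/
theorem condexp_hermite_gaussian
    {Ω : Type*} [m0 : MeasurableSpace Ω] (P : Measure Ω) [IsProbabilityMeasure P]
    (ξ ξ' : Ω → ℝ) (hξm : Measurable ξ) (hξ'm : Measurable ξ')
    (hξ : P.map ξ = gaussianReal 0 1) (hξ' : P.map ξ' = gaussianReal 0 1)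
    (hindep : IndepFun ξ ξ' P)
    (c : ℝ) (hc : c ∈ Set.Icc (-1 : ℝ) 1) (c' : ℝ) (hc' : c' = Real.sqrt (1 - c ^ 2))
    (n : ℕ) :
    P[(fun ω => hermiteR n (c * ξ ω + c' * ξ' ω)) |
        MeasurableSpace.comap ξ' (borel ℝ)]
      =ᵐ[P] fun ω => c' ^ n * hermiteR n (ξ' ω) := by
  obtain ⟨hc1, hc2⟩ := hc
  have hcc' : c^2 + c'^2 = 1 := by
    rw [hc', Real.sq_sqrt (by nlinarith : (0:ℝ) ≤ 1 - c^2)]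
    ring
  set γ := gaussianReal 0 1 with hγ
  have hm : MeasurableSpace.comap ξ' (borel ℝ) ≤ m0 := hξ'm.comap_le
  have hmap : P.map (fun ω => (ξ ω, ξ' ω)) = γ.prod γ := by
    have h := (indepFun_iff_map_prod_eq_prod_map_map hξm.aemeasurable hξ'm.aemeasurable).mp hindep
    rw [h, hξ, hξ']
  have hpairm : AEMeasurable (fun ω => (ξ ω, ξ' ω)) P := (hξm.prodMk hξ'm).aemeasurable
  set F : ℝ × ℝ → ℝ := fun p => hermiteR n (c * p.1 + c' * p.2) with hF
  have hFcont : Continuous F := (hermiteR_continuous n).comp (by continuity)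
  have hFint : Integrable F (γ.prod γ) := integrable_hermiteR_prod n c c'
  have hFintP : Integrable F (P.map fun ω => (ξ ω, ξ' ω)) := hmap ▸ hFint
  have hf : Integrable (fun ω => hermiteR n (c * ξ ω + c' * ξ' ω)) P :=
    (integrable_map_measure hFcont.aestronglyMeasurable hpairm).mp hFintP
  have hg'γ : Integrable (fun y : ℝ => c'^n * hermiteR n y) γ :=
    (integrable_hermiteR_gaussianReal n).const_mul _
  have hg'cont : Continuous (fun y : ℝ => c'^n * hermiteR n y) :=
    continuous_const.mul (hermiteR_continuous n)
  have hgP : Integrable (fun ω => c'^n * hermiteR n (ξ' ω)) P := by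
    refine (integrable_map_measure hg'cont.aestronglyMeasurable hξ'm.aemeasurable).mp ?_
    rw [hξ']; exact hg'γ
  refine (ae_eq_condExp_of_forall_setIntegral_eq hm hf ?_ ?_ ?_).symm
  · intro s _ _
    exact hgP.integrableOn
  · intro s hs _
    obtain ⟨t, ht, rfl⟩ := hs
    have htb : MeasurableSet t := ht
    set ind : ℝ → ℝ := t.indicator (fun _ => 1) with hind
    -- left side
    have hL0 : ∫ y in t, c'^n * hermiteR n y ∂(P.map ξ')
        = ∫ ω in ξ' ⁻¹' t, (c'^n * hermiteR n (ξ' ω)) ∂P := by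
      have hsm : AEStronglyMeasurable (fun y : ℝ => c'^n * hermiteR n y) (P.map ξ') :=
        hg'cont.aestronglyMeasurable
      exact setIntegral_map htb hsm hξ'm.aemeasurable
    rw [hξ'] at hL0
    rw [← hL0]
    -- right side
    have hpre : ξ' ⁻¹' t = (fun ω => (ξ ω, ξ' ω)) ⁻¹' (Set.univ ×ˢ t) := by
      ext ω; simp
    have hR1 : ∫ ω in ξ' ⁻¹' t, hermiteR n (c * ξ ω + c' * ξ' ω) ∂P
        = ∫ p in Set.univ ×ˢ t, F p ∂(γ.prod γ) := by
      rw [hpre, ← hmap]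
      exact (setIntegral_map (MeasurableSet.univ.prod htb) hFcont.aestronglyMeasurable
        hpairm).symm
    have hGind : ∀ p : ℝ × ℝ, Set.indicator (Set.univ ×ˢ t) F p = F p * ind p.2 := by
      intro p
      by_cases hp : p.2 ∈ t
      · simp [Set.indicator, hp, hind]
      · simp [Set.indicator, hp, hind]
    have hGint : Integrable (fun p : ℝ × ℝ => F p * ind p.2) (γ.prod γ) := by
      refine Integrable.mono' hFint.norm ?_ ?_
      · exact hFcont.aestronglyMeasurable.mul
          (((measurable_const.indicator htb).comp measurable_snd).aestronglyMeasurable)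
      · filter_upwards with p
        rw [norm_mul]
        have : ‖ind p.2‖ ≤ 1 := by
          by_cases hp : p.2 ∈ t <;> simp [hind, Set.indicator, hp]
        calc ‖F p‖ * ‖ind p.2‖ ≤ ‖F p‖ * 1 :=
              mul_le_mul_of_nonneg_left this (norm_nonneg _)
          _ = ‖F p‖ := mul_one _
    have hR2 : ∫ p in Set.univ ×ˢ t, F p ∂(γ.prod γ)
        = ∫ p : ℝ × ℝ, F p * ind p.2 ∂(γ.prod γ) := by
      rw [← integral_indicator (MeasurableSet.univ.prod htb)]
      exact integral_congr_ae (Filter.Eventually.of_forall hGind)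
    have hR3 : ∫ p : ℝ × ℝ, F p * ind p.2 ∂(γ.prod γ)
        = ∫ y, (∫ x, F (x, y) ∂γ) * ind y ∂γ := by
      rw [integral_prod_symm _ hGint]
      refine integral_congr_ae (Filter.Eventually.of_forall fun y => ?_)
      show (∫ x, F (x, y) * ind y ∂γ) = (∫ x, F (x, y) ∂γ) * ind y
      exact integral_mul_const _ _
    have hR4 : ∫ y, (∫ x, F (x, y) ∂γ) * ind y ∂γ = ∫ y in t, c'^n * hermiteR n y ∂γ := by
      rw [← integral_indicator htb]
      refine integral_congr_ae (Filter.Eventually.of_forall fun y => ?_)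
      have hkey : ∫ x, F (x, y) ∂γ = c'^n * hermiteR n y := keyγ c c' hcc' n y
      by_cases hy : y ∈ t
      · simp [Set.indicator, hy, hind, hkey]
      · simp [Set.indicator, hy, hind, hkey]
    rw [hR1, hR2, hR3, hR4]
  · have hmble : Measurable[MeasurableSpace.comap ξ' (borel ℝ)]
        (fun ω => c'^n * hermiteR n (ξ' ω)) := by
      have h1 : Measurable (fun y : ℝ => c'^n * hermiteR n y) := hg'cont.measurable
      exact h1.comp (comap_measurable ξ')
    exact (hmble.stronglyMeasurable).aestronglyMeasurable
end

section
/- There exists a constant c > 0 such that for all n ≥ 1 and all x ∈ [-1,1], |H_n(x)| ≤ c · n^{-1/4} · \sqrt{n!}. -/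
open Polynomial Nat

-- P1
theorem derivative_hermite' : ∀ n : ℕ, derivative (hermite n) = n * hermite (n - 1)
  | 0 => by simp
  | 1 => by simp [hermite_succ]
  | (n+2) => by
    have ih1 := derivative_hermite' (n+1)
    simp only [Nat.add_sub_cancel] at ih1 ⊢
    have hs : (X : Polynomial ℤ) * hermite n = hermite (n+1) + derivative (hermite n) := by
      rw [hermite_succ]; ring
    rw [hermite_succ (n+1), derivative_sub, derivative_mul, derivative_X, one_mul, ih1,
        derivative_mul, Polynomial.derivative_natCast, zero_mul, zero_add]
    have hx : (X : Polynomial ℤ) * ((n+1 : ℕ) * hermite n)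
        = (n+1 : ℕ) * (hermite (n+1) + derivative (hermite n)) := by
      rw [← hs]; ring
    rw [hx]
    push_cast
    ring

-- Wallis
theorem W1 : ∀ m : ℕ, (2*m+1) * ((2*m-1)‼)^2 ≤ ((2*m)‼)^2
  | 0 => by simp
  | (m+1) => by
    have ih := W1 m
    have h1 : (2*(m+1)-1)‼ = (2*m+1) * (2*m-1)‼ := by
      rw [show 2*(m+1)-1 = 2*m+1 by omega, doubleFactorial_add_one]
    have h2 : (2*(m+1))‼ = (2*m+2) * (2*m)‼ := by
      rw [show 2*(m+1) = 2*m+2 by omega, doubleFactorial_add_two]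
    rw [h1, h2]
    have hkey : (2*(m+1)+1) * (2*m+1) ≤ (2*m+2)^2 := by nlinarith
    calc (2*(m+1)+1) * ((2*m+1) * (2*m-1)‼)^2
        = ((2*(m+1)+1) * (2*m+1)) * ((2*m+1) * ((2*m-1)‼)^2) := by ring
      _ ≤ (2*m+2)^2 * ((2*m)‼)^2 := Nat.mul_le_mul hkey ih
      _ = ((2*m+2) * (2*m)‼)^2 := by ring

theorem W2 : ∀ m : ℕ, (2*m+2) * ((2*m)‼)^2 ≤ 2 * ((2*m+1)‼)^2
  | 0 => by simp
  | (m+1) => by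
    have ih := W2 m
    have h1 : (2*(m+1))‼ = (2*m+2) * (2*m)‼ := by
      rw [show 2*(m+1) = 2*m+2 by omega, doubleFactorial_add_two]
    have h2 : (2*(m+1)+1)‼ = (2*m+3) * (2*m+1)‼ := by
      rw [show 2*(m+1)+1 = 2*m+1+2 by omega, doubleFactorial_add_two]
    rw [h1, h2]
    have hkey : (2*(m+1)+2) * (2*m+2) ≤ (2*m+3)^2 := by nlinarith
    calc (2*(m+1)+2) * ((2*m+2) * (2*m)‼)^2
        = ((2*(m+1)+2) * (2*m+2)) * ((2*m+2) * ((2*m)‼)^2) := by ring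
      _ ≤ (2*m+3)^2 * (2 * ((2*m+1)‼)^2) := Nat.mul_le_mul hkey ih
      _ = 2 * ((2*m+3) * (2*m+1)‼)^2 := by ring

-- ODE at polynomial level
theorem hermite_ode (n : ℕ) :
    (X : Polynomial ℤ) * derivative (hermite n)
      = derivative (derivative (hermite n)) + n * hermite n := by
  cases n with
  | zero => simp
  | succ m =>
    have h1 : derivative (hermite (m+1)) = ((m+1 : ℕ) : Polynomial ℤ) * hermite m := by
      simpa using derivative_hermite' (m+1)
    rw [h1, derivative_mul, Polynomial.derivative_natCast, zero_mul, zero_add]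
    have hs : (X : Polynomial ℤ) * hermite m = hermite (m+1) + derivative (hermite m) := by
      rw [hermite_succ]; ring
    calc (X : Polynomial ℤ) * (((m+1 : ℕ) : Polynomial ℤ) * hermite m)
        = ((m+1 : ℕ) : Polynomial ℤ) * ((X : Polynomial ℤ) * hermite m) := by ring
      _ = ((m+1 : ℕ) : Polynomial ℤ) * (hermite (m+1) + derivative (hermite m)) := by rw [hs]
      _ = ((m+1 : ℕ) : Polynomial ℤ) * derivative (hermite m)
            + ((m+1 : ℕ) : Polynomial ℤ) * hermite (m+1) := by ring

lemma aeval_zero_int (p : Polynomial ℤ) :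
    Polynomial.aeval (0:ℝ) p = ((p.coeff 0 : ℤ) : ℝ) := by
  rw [Polynomial.aeval_def, Polynomial.eval₂_eq_eval_map, ← Polynomial.coeff_zero_eq_eval_zero,
    Polynomial.coeff_map]
  simp

lemma sq_le_of (a b : ℝ) (ha : 0 ≤ a) (hb : 0 ≤ b) (h : a^2 ≤ b^2) : a ≤ b := by
  nlinarith [sq_nonneg (a - b), sq_nonneg (a + b)]

theorem E0_le (n : ℕ) (hn : 1 ≤ n) :
    (Polynomial.aeval (0:ℝ) (derivative (hermite n)))^2
      + ((n:ℝ) + 1/2) * (Polynomial.aeval (0:ℝ) (hermite n))^2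
      ≤ 2 * Real.sqrt n * (n)! := by
  set a := Polynomial.aeval (0:ℝ) (derivative (hermite n)) with ha
  set b := Polynomial.aeval (0:ℝ) (hermite n) with hb
  have hLHS0 : 0 ≤ a^2 + ((n:ℝ) + 1/2) * b^2 := by positivity
  have hsq : (2 * Real.sqrt n * (n)! : ℝ)^2 = 4 * n * ((n)! : ℝ)^2 := by
    have : Real.sqrt n ^ 2 = (n:ℝ) := Real.sq_sqrt (Nat.cast_nonneg n)
    nlinarith [this]
  have hRHS0 : (0:ℝ) ≤ 2 * Real.sqrt n * (n)! := by positivity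
  apply sq_le_of _ _ hLHS0 hRHS0
  rw [hsq]
  have hn1 : (1:ℝ) ≤ (n:ℝ) := by exact_mod_cast hn
  rcases Nat.even_or_odd n with ⟨m, hm⟩ | ⟨m, hm⟩
  · -- n = 2m, a = 0, b = ±(2m-1)‼
    have hm' : n = 2*m := by omega
    subst hm'
    have ha0 : a = 0 := by
      rw [ha, aeval_zero_int, Polynomial.coeff_derivative,
        Polynomial.coeff_hermite_of_odd_add (by simpa using ⟨m, by ring⟩ : Odd (2*m + 1))]
      simp
    set D : ℝ := ((2*m-1)‼ : ℝ) with hD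
    have hDnn : 0 ≤ D := by positivity
    have hb2 : b^2 = D^2 := by
      rw [hb, aeval_zero_int, show (2*m) = 2*m+0 from rfl, Polynomial.coeff_hermite_explicit]
      push_cast
      rw [mul_pow, mul_pow, ← pow_mul, mul_comm m 2, pow_mul]
      simp
      rw [hD]
    set nd : ℝ := ((2*m)‼ : ℝ) with hnd
    have hndnn : 0 ≤ nd := by positivity
    have hm1 : (1:ℝ) ≤ (m:ℝ) := by exact_mod_cast (by omega : 1 ≤ m)
    have f1 : (2*(m:ℝ) + 1) * D^2 ≤ nd^2 := by
      have h := W1 m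
      have h2 : (((2*m+1) * ((2*m-1)‼)^2 : ℕ) : ℝ) ≤ ((((2*m)‼)^2 : ℕ) : ℝ) := by
        exact_mod_cast h
      push_cast at h2
      rw [hD, hnd]
      push_cast
      linarith
    have f2 : (((2*m : ℕ))! : ℝ) = nd * D := by
      have h1 : 1 ≤ 2*m := hn
      have h := Nat.factorial_eq_mul_doubleFactorial (2*m-1)
      rw [show 2*m-1+1 = 2*m by omega] at h
      rw [h]
      push_cast
      ring
    rw [ha0, hb2, f2]
    have e1 : (0:ℝ)^2 + (2*(m:ℝ)+1/2)*D^2 ≤ (2*(m:ℝ)+1)*D^2 := by nlinarith [sq_nonneg D]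
    have e1n : (0:ℝ) ≤ (0:ℝ)^2 + (2*(m:ℝ)+1/2)*D^2 := by positivity
    have final : ((0:ℝ)^2 + (2*(m:ℝ)+1/2)*D^2)^2 ≤ 4*(2*(m:ℝ)) * (nd*D)^2 := by
      calc ((0:ℝ)^2 + (2*(m:ℝ)+1/2)*D^2)^2 ≤ ((2*(m:ℝ)+1)*D^2)^2 :=
            pow_le_pow_left₀ e1n e1 2
        _ = (2*(m:ℝ)+1) * (((2*(m:ℝ)+1)*D^2) * D^2) := by ring
        _ ≤ (2*(m:ℝ)+1) * (nd^2 * D^2) :=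
            mul_le_mul_of_nonneg_left
              (mul_le_mul_of_nonneg_right f1 (sq_nonneg D)) (by positivity)
        _ ≤ (8*(m:ℝ)) * (nd^2 * D^2) := by
            apply mul_le_mul_of_nonneg_right _ (by positivity)
            linarith
        _ = 4*(2*(m:ℝ)) * (nd*D)^2 := by ring
    push_cast
    nlinarith [final]
  · -- n = 2m+1, b = 0
    subst hm
    have hb0 : b = 0 := by
      rw [hb, aeval_zero_int,
        Polynomial.coeff_hermite_of_odd_add (by simpa using ⟨m, by ring⟩ : Odd (2*m+1 + 0))]
      simp
    set D : ℝ := ((2*m-1)‼ : ℝ) with hD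
    have hDnn : 0 ≤ D := by positivity
    have ha2 : a^2 = (2*(m:ℝ)+1)^2 * D^2 := by
      rw [ha, aeval_zero_int, Polynomial.coeff_derivative]
      simp only [Nat.cast_zero, zero_add, mul_one]
      rw [Polynomial.coeff_hermite_explicit m 1]
      push_cast
      rw [show ((2*m+1).choose 1 : ℝ) = 2*(m:ℝ)+1 by
        rw [Nat.choose_one_right]; push_cast; ring]
      have hneg : ((-1:ℝ)^m)^2 = 1 := by rw [← pow_mul, mul_comm m 2, pow_mul]; simp
      rw [mul_pow, mul_pow, hneg, hD]
      ring
    set nd : ℝ := ((2*m)‼ : ℝ) with hnd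
    set nf : ℝ := ((2*m+1)‼ : ℝ) with hnf
    have hndnn : 0 ≤ nd := by positivity
    have hnfnn : 0 ≤ nf := by positivity
    have f1 : (2*(m:ℝ) + 1) * D^2 ≤ nd^2 := by
      have h := W1 m
      have h2 : (((2*m+1) * ((2*m-1)‼)^2 : ℕ) : ℝ) ≤ ((((2*m)‼)^2 : ℕ) : ℝ) := by
        exact_mod_cast h
      push_cast at h2
      rw [hD, hnd]
      push_cast
      linarith
    have f2 : (2*(m:ℝ) + 2) * nd^2 ≤ 2 * nf^2 := by
      have h := W2 m
      have h2 : (((2*m+2) * ((2*m)‼)^2 : ℕ) : ℝ) ≤ ((2 * ((2*m+1)‼)^2 : ℕ) : ℝ) := by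
        exact_mod_cast h
      push_cast at h2
      rw [hnd, hnf]
      push_cast
      linarith
    have f3 : (((2*m+1 : ℕ))! : ℝ) = nf * nd := by
      have h := Nat.factorial_eq_mul_doubleFactorial (2*m)
      rw [h]
      push_cast
      ring
    rw [hb0, ha2, f3]
    have hf1n : (0:ℝ) ≤ (2*(m:ℝ)+1) * D^2 := by positivity
    have final : ((2*(m:ℝ)+1)^2 * D^2 + (2*(m:ℝ)+1+1/2) * 0^2)^2
        ≤ 4*(2*(m:ℝ)+1) * (nf*nd)^2 := by
      calc ((2*(m:ℝ)+1)^2 * D^2 + (2*(m:ℝ)+1+1/2) * 0^2)^2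
          = ((2*(m:ℝ)+1) * D^2)^2 * (2*(m:ℝ)+1)^2 := by ring
        _ ≤ (nd^2)^2 * (2*(m:ℝ)+1)^2 :=
            mul_le_mul_of_nonneg_right (pow_le_pow_left₀ hf1n f1 2) (by positivity)
        _ = (2*(m:ℝ)+1) * (((2*(m:ℝ)+1) * nd^2) * nd^2) := by ring
        _ ≤ (2*(m:ℝ)+1) * (((2*(m:ℝ)+2) * nd^2) * nd^2) := by
            have h9 : ((2*(m:ℝ)+1) * nd^2) * nd^2 ≤ ((2*(m:ℝ)+2) * nd^2) * nd^2 := by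
              apply mul_le_mul_of_nonneg_right _ (sq_nonneg nd)
              apply mul_le_mul_of_nonneg_right _ (sq_nonneg nd)
              linarith
            exact mul_le_mul_of_nonneg_left h9 (by positivity)
        _ ≤ (2*(m:ℝ)+1) * ((2 * nf^2) * nd^2) :=
            mul_le_mul_of_nonneg_left
              (mul_le_mul_of_nonneg_right f2 (sq_nonneg nd)) (by positivity)
        _ = 2*(2*(m:ℝ)+1) * (nf*nd)^2 := by ring
        _ ≤ 4*(2*(m:ℝ)+1) * (nf*nd)^2 :=
            mul_le_mul_of_nonneg_right (by linarith) (sq_nonneg (nf*nd))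
    have hc : ((2*m+1 : ℕ) : ℝ) = 2*(m:ℝ)+1 := by push_cast; ring
    rw [hc]
    linarith [final]

/-- There is a constant `c > 0` such that for all `n ≥ 1` and all `x ∈ [-1, 1]`,
`|Hₙ(x)| ≤ c · n^{-1/4} · √(n!)`. -/
theorem hermite_bound_on_unit_interval :
    ∃ c : ℝ, 0 < c ∧ ∀ n : ℕ, 1 ≤ n → ∀ x ∈ Set.Icc (-1 : ℝ) 1,
      |hermiteR n x| ≤ c * (n : ℝ) ^ (-(1/4) : ℝ) * Real.sqrt (Nat.factorial n) := by
  refine ⟨2, by norm_num, fun n hn x hx => ?_⟩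
  obtain ⟨hx1, hx2⟩ := hx
  -- basic functions
  set h1 : ℝ → ℝ := fun y => Polynomial.aeval y (derivative (hermite n)) with hh1
  set h2 : ℝ → ℝ := fun y => Polynomial.aeval y (derivative (derivative (hermite n))) with hh2
  have hd : ∀ y : ℝ, HasDerivAt (hermiteR n) (h1 y) y := fun y =>
    (hermite n).hasDerivAt_aeval y
  have hd1 : ∀ y : ℝ, HasDerivAt h1 (h2 y) y := fun y =>
    (derivative (hermite n)).hasDerivAt_aeval y
  have hode : ∀ y : ℝ, h2 y = y * h1 y - n * hermiteR n y := by
    intro y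
    have := congrArg (Polynomial.aeval y) (hermite_ode n)
    simp only [map_mul, map_add, Polynomial.aeval_X, Polynomial.aeval_natCast,
      map_natCast] at this
    simp only [hh1, hh2, hermiteR]
    linarith [this]
  -- weight
  set w : ℝ → ℝ := fun y => Real.exp (-(y^2)/4) with hw
  have hwd : ∀ y : ℝ, HasDerivAt w (-(y/2) * w y) y := by
    intro y
    have h0 : HasDerivAt (fun y : ℝ => -(y^2)/4) (-(y/2)) y := by
      have := ((hasDerivAt_pow 2 y).neg).div_const 4
      refine this.congr_deriv (Eq.symm ?_)
      norm_num
      ring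
    have := h0.exp
    convert this using 1
    ring
  set u : ℝ → ℝ := fun y => w y * hermiteR n y with hu
  set g : ℝ → ℝ := fun y => w y * (h1 y - y/2 * hermiteR n y) with hg
  have hud : ∀ y : ℝ, HasDerivAt u (g y) y := by
    intro y
    have := (hwd y).mul (hd y)
    refine this.congr_deriv (Eq.symm ?_)
    simp only [hg]
    ring
  have hgd : ∀ y : ℝ, HasDerivAt g ((y^2/4 - n - 1/2) * u y) y := by
    intro y
    have hin : HasDerivAt (fun z : ℝ => h1 z - z/2 * hermiteR n z)
        (h2 y - (1/2 * hermiteR n y + y/2 * h1 y)) y := by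
      have hq : HasDerivAt (fun z : ℝ => z/2 * hermiteR n z)
          (1/2 * hermiteR n y + y/2 * h1 y) y := by
        have := ((hasDerivAt_id y).div_const 2).mul (hd y)
        refine this.congr_deriv (Eq.symm ?_)
        simp only [id]
        try ring
      exact (hd1 y).sub hq
    have := (hwd y).mul hin
    refine this.congr_deriv (Eq.symm ?_)
    simp only [hg, hu]
    rw [hode y]
    ring
  set E : ℝ → ℝ := fun y => g y ^ 2 + ((n:ℝ) + 1/2 - y^2/4) * u y ^ 2 with hE
  have hEd : ∀ y : ℝ, HasDerivAt E (-(y/2) * u y ^ 2) y := by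
    intro y
    have t1 := (hgd y).pow 2
    have t2 : HasDerivAt (fun z : ℝ => (n:ℝ) + 1/2 - z^2/4) (-(y/2)) y := by
      have := (hasDerivAt_pow 2 y).div_const 4
      have h3 := (hasDerivAt_const y ((n:ℝ) + 1/2)).sub this
      refine h3.congr_deriv (Eq.symm ?_)
      push_cast
      ring
    have t3 := t2.mul ((hud y).pow 2)
    have := t1.add t3
    refine this.congr_deriv (Eq.symm ?_)
    simp only [Pi.pow_apply]
    ring
  have hcont : Continuous E := by
    have : Differentiable ℝ E := fun y => (hEd y).differentiableAt
    exact this.continuous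
  -- E x ≤ E 0 on [-1,1]
  have hmax : E x ≤ E 0 := by
    rcases le_or_gt x 0 with hx0 | hx0
    · have hmono : MonotoneOn E (Set.Icc (-1 : ℝ) 0) := by
        apply monotoneOn_of_deriv_nonneg (convex_Icc _ _) hcont.continuousOn
          (fun y _ => (hEd y).differentiableAt.differentiableWithinAt)
        intro y hy
        rw [(hEd y).deriv]
        rw [interior_Icc] at hy
        have : y ≤ 0 := le_of_lt hy.2
        nlinarith [sq_nonneg (u y)]
      exact hmono ⟨hx1, hx0⟩ ⟨by norm_num, le_refl 0⟩ hx0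
    · have hmono : AntitoneOn E (Set.Icc (0 : ℝ) 1) := by
        apply antitoneOn_of_deriv_nonpos (convex_Icc _ _) hcont.continuousOn
          (fun y _ => (hEd y).differentiableAt.differentiableWithinAt)
        intro y hy
        rw [(hEd y).deriv]
        rw [interior_Icc] at hy
        have : 0 ≤ y := le_of_lt hy.1
        nlinarith [sq_nonneg (u y)]
      exact hmono ⟨le_refl 0, by norm_num⟩ ⟨le_of_lt hx0, hx2⟩ (le_of_lt hx0)
  -- value at 0
  have hE0 : E 0 ≤ 2 * Real.sqrt n * (n)! := by
    have hw0 : w 0 = 1 := by simp [hw]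
    have hg0 : g 0 = h1 0 := by simp [hg, hw0]
    have hu0 : u 0 = hermiteR n 0 := by simp [hu, hw0]
    have : E 0 = h1 0 ^ 2 + ((n:ℝ) + 1/2) * hermiteR n 0 ^ 2 := by
      simp [hE, hg0, hu0]
    rw [this]
    exact E0_le n hn
  -- lower bound for E x
  have hlow : (n:ℝ) * Real.exp (-(1/2)) * hermiteR n x ^ 2 ≤ E x := by
    have hwsq : w x ^ 2 = Real.exp (-(x^2)/2) := by
      rw [hw]
      rw [sq, ← Real.exp_add]
      ring_nf
    have hexple : Real.exp (-(1/2) : ℝ) ≤ Real.exp (-(x^2)/2) := by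
      apply Real.exp_le_exp.mpr
      nlinarith [sq_nonneg x]
    have hn1 : (1:ℝ) ≤ (n:ℝ) := by exact_mod_cast hn
    have husq : u x ^ 2 = Real.exp (-(x^2)/2) * hermiteR n x ^ 2 := by
      rw [hu]
      simp only [mul_pow]
      rw [hwsq]
    have key : (n:ℝ) * Real.exp (-(1/2)) * hermiteR n x ^ 2
        ≤ ((n:ℝ) + 1/2 - x^2/4) * u x ^ 2 := by
      rw [husq]
      have h2x : hermiteR n x ^ 2 ≥ 0 := sq_nonneg _
      have hc1 : (n:ℝ) ≤ (n:ℝ) + 1/2 - x^2/4 := by nlinarith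
      have hc2 : (0:ℝ) < Real.exp (-(1/2) : ℝ) := Real.exp_pos _
      nlinarith [mul_le_mul hc1 hexple (le_of_lt hc2) (by linarith : (0:ℝ) ≤ (n:ℝ) + 1/2 - x^2/4),
        sq_nonneg (hermiteR n x)]
    calc (n:ℝ) * Real.exp (-(1/2)) * hermiteR n x ^ 2
        ≤ ((n:ℝ) + 1/2 - x^2/4) * u x ^ 2 := key
      _ ≤ E x := by simp only [hE]; nlinarith [sq_nonneg (g x)]
  -- put together
  set s : ℝ := Real.sqrt n with hs
  set f : ℝ := Real.sqrt (n)! with hf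
  have hnpos : (0:ℝ) < (n:ℝ) := by exact_mod_cast hn
  have hs0 : 0 < s := Real.sqrt_pos.mpr hnpos
  have hs2 : s ^ 2 = (n:ℝ) := Real.sq_sqrt (le_of_lt hnpos)
  have hf0 : 0 ≤ f := Real.sqrt_nonneg _
  have hf2 : f ^ 2 = ((n)! : ℝ) := Real.sq_sqrt (by positivity)
  set t : ℝ := (n:ℝ) ^ ((1/4 : ℝ)) with ht
  have ht0 : 0 < t := Real.rpow_pos_of_pos hnpos _
  have ht2 : t ^ 2 = s := by
    rw [ht, hs, ← Real.rpow_natCast ((n:ℝ) ^ ((1/4:ℝ))) 2, ← Real.rpow_mul (le_of_lt hnpos)]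
    rw [Real.sqrt_eq_rpow]
    norm_num
  have hrpow : (n:ℝ) ^ (-(1/4) : ℝ) = t⁻¹ := by
    rw [ht, Real.rpow_neg (le_of_lt hnpos)]
  -- exp bound
  have hexp2 : Real.exp ((1:ℝ)/2) ≤ 2 := by
    have hmul : Real.exp ((1:ℝ)/2) * Real.exp ((1:ℝ)/2) = Real.exp 1 := by
      rw [← Real.exp_add]; norm_num
    have h2 := Real.exp_one_lt_d9
    apply sq_le_of _ _ (le_of_lt (Real.exp_pos _)) (by norm_num)
    rw [sq, hmul]
    norm_num
    linarith [h2]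
  have hinv : Real.exp (-(1/2) : ℝ) * Real.exp ((1:ℝ)/2) = 1 := by
    rw [← Real.exp_add]; norm_num
  -- combine: n * exp(-1/2) * h^2 ≤ 2 s f^2
  have hA : (n:ℝ) * Real.exp (-(1/2)) * hermiteR n x ^ 2 ≤ 2 * s * ((n)! : ℝ) :=
    le_trans hlow (le_trans hmax hE0)
  have hA2 : (n:ℝ) * hermiteR n x ^ 2 ≤ 2 * s * ((n)! : ℝ) * Real.exp ((1:ℝ)/2) := by
    have := mul_le_mul_of_nonneg_right hA (le_of_lt (Real.exp_pos ((1:ℝ)/2)))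
    calc (n:ℝ) * hermiteR n x ^ 2
        = (n:ℝ) * Real.exp (-(1/2)) * hermiteR n x ^ 2 * Real.exp ((1:ℝ)/2) := by
          rw [show (n:ℝ) * Real.exp (-(1/2)) * hermiteR n x ^ 2 * Real.exp ((1:ℝ)/2)
            = (n:ℝ) * hermiteR n x ^ 2 * (Real.exp (-(1/2):ℝ) * Real.exp ((1:ℝ)/2)) by ring,
            hinv, mul_one]
      _ ≤ 2 * s * ((n)! : ℝ) * Real.exp ((1:ℝ)/2) := this
  have hA3 : (n:ℝ) * hermiteR n x ^ 2 ≤ 4 * s * ((n)! : ℝ) := by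
    have hsf : (0:ℝ) ≤ 2 * s * ((n)! : ℝ) := by positivity
    calc (n:ℝ) * hermiteR n x ^ 2 ≤ 2 * s * ((n)! : ℝ) * Real.exp ((1:ℝ)/2) := hA2
      _ ≤ 2 * s * ((n)! : ℝ) * 2 := mul_le_mul_of_nonneg_left hexp2 hsf
      _ = 4 * s * ((n)! : ℝ) := by ring
  have hgoal2 : hermiteR n x ^ 2 * s ≤ 4 * ((n)! : ℝ) := by
    have : s * (hermiteR n x ^ 2 * s) ≤ s * (4 * ((n)! : ℝ)) := by
      calc s * (hermiteR n x ^ 2 * s) = s^2 * hermiteR n x ^ 2 := by ring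
        _ = (n:ℝ) * hermiteR n x ^ 2 := by rw [hs2]
        _ ≤ 4 * s * ((n)! : ℝ) := hA3
        _ = s * (4 * ((n)! : ℝ)) := by ring
    exact le_of_mul_le_mul_left this hs0
  -- finish
  rw [hrpow]
  have hrhs0 : (0:ℝ) ≤ 2 * t⁻¹ * f := by positivity
  apply sq_le_of _ _ (abs_nonneg _) hrhs0
  rw [sq_abs]
  have hrhs : (2 * t⁻¹ * f)^2 = 4 * ((n)! : ℝ) / s := by
    rw [mul_pow, mul_pow, hf2, inv_pow, ht2, div_eq_mul_inv]
    ring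
  rw [hrhs]
  exact (le_div_iff₀ hs0).mpr hgoal2
end

section
/- Let A and Q be bounded linear operators on L^2([0,1]) with ‖Ah‖^2 + ‖Qh‖^2 = ‖h‖^2 for all h. Let w and w' be independent standard Brownian motions, η(t) = \int_0^1 A(𝟙_{[0,t]})dw and ζ(t) = \int_0^1 Q(𝟙_{[0,t]})dw'. Then the process \tilde w(t) = η(t) + ζ(t), t ∈ [0,1], is a standard Brownian motion. -/
open MeasureTheory ProbabilityTheory
open scoped RealInnerProductSpace
open scoped ENNReal NNReal

section BMaux
open Real
open scoped ENNReal NNReal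

namespace BMaux

lemma exponent_identity {a b : ℝ} (ha : 0 < a) (hb : 0 < b) (y x : ℝ) :
    -(x - 0)^2 / (2*a) + -(y - x - 0)^2 / (2*b)
      = -((a+b)/(2*a*b)) * (x - a*y/(a+b))^2 + -(y-0)^2/(2*(a+b)) := by
  have hab : a + b ≠ 0 := by positivity
  field_simp
  ring

lemma gaussian_conv_pdf {v₁ v₂ : ℝ≥0} (h₁ : v₁ ≠ 0) (h₂ : v₂ ≠ 0) (y : ℝ) :
    ∫ x, gaussianPDFReal 0 v₁ x * gaussianPDFReal 0 v₂ (y - x)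
      = gaussianPDFReal 0 (v₁ + v₂) y := by
  have ha : 0 < (v₁ : ℝ) := by exact_mod_cast pos_iff_ne_zero.mpr h₁
  have hb : 0 < (v₂ : ℝ) := by exact_mod_cast pos_iff_ne_zero.mpr h₂
  set a : ℝ := (v₁ : ℝ)
  set b : ℝ := (v₂ : ℝ)
  have hab : 0 < a + b := by linarith
  set B : ℝ := (a+b)/(2*a*b) with hB_def
  have hB : 0 < B := by positivity
  set c : ℝ := a*y/(a+b) with hc_def
  set K : ℝ := (√(2*π*a))⁻¹ * (√(2*π*b))⁻¹ * rexp (-(y-0)^2/(2*(a+b))) with hK_def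
  have key : ∀ x, gaussianPDFReal 0 v₁ x * gaussianPDFReal 0 v₂ (y - x)
      = K * rexp (-B * (x - c)^2) := by
    intro x
    simp only [gaussianPDFReal, hK_def]
    rw [mul_mul_mul_comm, ← Real.exp_add, exponent_identity ha hb y x, Real.exp_add]
    ring
  simp only [key]
  rw [integral_const_mul, integral_sub_right_eq_self (fun x => rexp (-B * x^2)) c,
    integral_gaussian]
  simp only [gaussianPDFReal, hK_def]
  have h1 : ((v₁ + v₂ : ℝ≥0) : ℝ) = a + b := by push_cast; ring
  rw [h1]
  have hconst : (√(2*π*a))⁻¹ * (√(2*π*b))⁻¹ * √(π/B) = (√(2*π*(a+b)))⁻¹ := by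
    rw [← Real.sqrt_inv, ← Real.sqrt_inv, ← Real.sqrt_inv,
      ← Real.sqrt_mul (by positivity), ← Real.sqrt_mul (by positivity)]
    congr 1
    rw [hB_def]
    have hπ : (0:ℝ) < π := pi_pos
    field_simp
  rw [← hconst]
  ring

lemma gaussian_pdf_le (v : ℝ≥0) (x : ℝ) :
    gaussianPDFReal 0 v x ≤ (√(2*π*v))⁻¹ := by
  rw [gaussianPDFReal]
  have h1 : rexp (-(x - 0)^2 / (2*(v:ℝ))) ≤ 1 := by
    rw [Real.exp_le_one_iff]
    by_cases hv : (v:ℝ) = 0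
    · simp [hv]
    · apply div_nonpos_of_nonpos_of_nonneg
      · nlinarith [sq_nonneg (x - 0)]
      · positivity
  exact mul_le_of_le_one_right (by positivity) h1

lemma gaussian_conv_integrable (v₁ v₂ : ℝ≥0) (y : ℝ) :
    Integrable (fun x => gaussianPDFReal 0 v₁ x * gaussianPDFReal 0 v₂ (y - x)) := by
  apply Integrable.mono' ((integrable_gaussianPDFReal 0 v₁).mul_const ((√(2*π*v₂))⁻¹))
  · exact ((measurable_gaussianPDFReal 0 v₁).mul
      ((measurable_gaussianPDFReal 0 v₂).comp (measurable_const.sub measurable_id))).aestronglyMeasurable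
  · refine Filter.Eventually.of_forall fun x => ?_
    rw [Real.norm_of_nonneg (mul_nonneg (gaussianPDFReal_nonneg _ _ _) (gaussianPDFReal_nonneg _ _ _))]
    exact mul_le_mul_of_nonneg_left (gaussian_pdf_le v₂ (y - x)) (gaussianPDFReal_nonneg _ _ _)

lemma gaussian_conv_lintegral {v₁ v₂ : ℝ≥0} (h₁ : v₁ ≠ 0) (h₂ : v₂ ≠ 0) (y : ℝ) :
    ∫⁻ x, gaussianPDF 0 v₁ x * gaussianPDF 0 v₂ (y - x) = gaussianPDF 0 (v₁ + v₂) y := by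
  simp only [gaussianPDF]
  have : ∀ x, ENNReal.ofReal (gaussianPDFReal 0 v₁ x) * ENNReal.ofReal (gaussianPDFReal 0 v₂ (y - x))
      = ENNReal.ofReal (gaussianPDFReal 0 v₁ x * gaussianPDFReal 0 v₂ (y - x)) := fun x =>
    (ENNReal.ofReal_mul (gaussianPDFReal_nonneg _ _ _)).symm
  simp_rw [this]
  rw [← ofReal_integral_eq_lintegral_ofReal (gaussian_conv_integrable v₁ v₂ y)
    (Filter.Eventually.of_forall fun x => mul_nonneg (gaussianPDFReal_nonneg _ _ _) (gaussianPDFReal_nonneg _ _ _)),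
    gaussian_conv_pdf h₁ h₂ y]

variable {Ω : Type*} [MeasurableSpace Ω]

lemma ae_zero_of_map_dirac {P : Measure Ω} [IsProbabilityMeasure P] {X : Ω → ℝ}
    (hX : Measurable X) (h : P.map X = Measure.dirac 0) : X =ᵐ[P] 0 := by
  have h0 : P.map X ({0}ᶜ : Set ℝ) = 0 := by rw [h]; simp
  rw [Measure.map_apply hX (MeasurableSet.singleton (0:ℝ)).compl] at h0
  rw [Filter.EventuallyEq, ae_iff]
  convert h0 using 2
  ext ω; simp

lemma map_add_of_gaussian {P : Measure Ω} [IsProbabilityMeasure P]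
    {X Y : Ω → ℝ} (hX : Measurable X) (hY : Measurable Y) (hXY : IndepFun X Y P)
    {v₁ v₂ : ℝ≥0} (h1 : P.map X = gaussianReal 0 v₁) (h2 : P.map Y = gaussianReal 0 v₂) :
    P.map (fun ω => X ω + Y ω) = gaussianReal 0 (v₁ + v₂) := by
  by_cases hv1 : v₁ = 0
  · subst hv1
    rw [gaussianReal_zero_var] at h1
    have hXae : X =ᵐ[P] 0 := ae_zero_of_map_dirac hX h1
    have heq : (fun ω => X ω + Y ω) =ᵐ[P] Y := by
      filter_upwards [hXae] with ω h; simp [h]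
    rw [Measure.map_congr heq, h2, zero_add]
  by_cases hv2 : v₂ = 0
  · subst hv2
    rw [gaussianReal_zero_var] at h2
    have hYae : Y =ᵐ[P] 0 := ae_zero_of_map_dirac hY h2
    have heq : (fun ω => X ω + Y ω) =ᵐ[P] X := by
      filter_upwards [hYae] with ω h; simp [h]
    rw [Measure.map_congr heq, h1, add_zero]
  have hprod : P.map (fun ω => (X ω, Y ω)) = (gaussianReal 0 v₁).prod (gaussianReal 0 v₂) := by
    rw [← h1, ← h2]
    exact (indepFun_iff_map_prod_eq_prod_map_map hX.aemeasurable hY.aemeasurable).1 hXY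
  have hcomp : (fun ω => X ω + Y ω) = (fun p : ℝ × ℝ => p.1 + p.2) ∘ (fun ω => (X ω, Y ω)) := rfl
  have hadd : Measurable (fun p : ℝ × ℝ => p.1 + p.2) := measurable_fst.add measurable_snd
  rw [hcomp, ← Measure.map_map hadd (hX.prodMk hY), hprod]
  have hv12 : v₁ + v₂ ≠ 0 := by simp [hv1, hv2]
  ext s hs
  rw [Measure.map_apply hadd hs, Measure.prod_apply (hs.preimage hadd)]
  have inner_eq : ∀ x : ℝ,
      gaussianReal 0 v₂ (Prod.mk x ⁻¹' ((fun p : ℝ × ℝ => p.1 + p.2) ⁻¹' s))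
        = ∫⁻ z in s, gaussianPDF 0 v₂ (z - x) := by
    intro x
    have hset : (Prod.mk x ⁻¹' ((fun p : ℝ × ℝ => p.1 + p.2) ⁻¹' s))
        = (fun y => x + y) ⁻¹' s := rfl
    have hms : MeasurableSet ((fun y : ℝ => x + y) ⁻¹' s) :=
      hs.preimage (measurable_const.add measurable_id)
    rw [hset, gaussianReal_of_var_ne_zero _ hv2, withDensity_apply _ hms,
      ← lintegral_indicator hms, ← lintegral_indicator hs]
    have hptwise : ∀ y : ℝ, ((fun y : ℝ => x + y) ⁻¹' s).indicator (gaussianPDF 0 v₂) y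
        = s.indicator (fun z => gaussianPDF 0 v₂ (z - x)) (x + y) := by
      intro y
      by_cases hmem : x + y ∈ s
      · simp [Set.indicator, Set.mem_preimage, hmem, add_sub_cancel_left]
      · simp [Set.indicator, Set.mem_preimage, hmem]
    simp_rw [hptwise]
    exact lintegral_add_left_eq_self (s.indicator fun z => gaussianPDF 0 v₂ (z - x)) x
  simp_rw [inner_eq]
  have hinner_meas : Measurable (fun x : ℝ => ∫⁻ z in s, gaussianPDF 0 v₂ (z - x)) := by
    apply Measurable.lintegral_prod_right
    exact (measurable_gaussianPDF 0 v₂).comp (measurable_snd.sub measurable_fst)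
  rw [gaussianReal_of_var_ne_zero _ hv1,
    lintegral_withDensity_eq_lintegral_mul _ (measurable_gaussianPDF 0 v₁) hinner_meas]
  have hswap : ∀ x : ℝ, gaussianPDF 0 v₁ x * ∫⁻ z in s, gaussianPDF 0 v₂ (z - x)
      = ∫⁻ z in s, gaussianPDF 0 v₁ x * gaussianPDF 0 v₂ (z - x) := fun x =>
    (lintegral_const_mul _ ((measurable_gaussianPDF 0 v₂).comp (measurable_id.sub measurable_const))).symm
  simp only [Pi.mul_apply]
  simp_rw [hswap]
  rw [lintegral_lintegral_swap]
  · have : ∀ z : ℝ, ∫⁻ x, gaussianPDF 0 v₁ x * gaussianPDF 0 v₂ (z - x)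
        = gaussianPDF 0 (v₁ + v₂) z := fun z => gaussian_conv_lintegral hv1 hv2 z
    simp_rw [this]
    rw [gaussianReal_of_var_ne_zero _ hv12, withDensity_apply _ hs]
  · apply Measurable.aemeasurable
    exact ((measurable_gaussianPDF 0 v₁).comp measurable_fst).mul
      ((measurable_gaussianPDF 0 v₂).comp (measurable_snd.sub measurable_fst))

lemma memℒp_two_id_gaussianReal (v : ℝ≥0) : MemLp (id : ℝ → ℝ) 2 (gaussianReal 0 v) := by
  by_cases hv : v = 0
  · subst hv
    rw [gaussianReal_zero_var]
    exact (memLp_const (0:ℝ)).ae_eq (MeasureTheory.ae_eq_dirac (id : ℝ → ℝ)).symm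
  · have hvpos : 0 < (v:ℝ) := by exact_mod_cast pos_iff_ne_zero.mpr hv
    rw [gaussianReal_of_var_ne_zero _ hv,
      memLp_two_iff_integrable_sq aestronglyMeasurable_id,
      integrable_withDensity_iff (measurable_gaussianPDF 0 v)
        (Filter.Eventually.of_forall fun x => ENNReal.ofReal_lt_top)]
    have heq : (fun x : ℝ => (id x)^2 * (gaussianPDF 0 v x).toReal)
        = fun x => (√(2*π*v))⁻¹ * (x^2 * rexp (-(2*(v:ℝ))⁻¹ * x^2)) := by
      funext x
      rw [gaussianPDF, ENNReal.toReal_ofReal (gaussianPDFReal_nonneg _ _ _)]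
      simp only [gaussianPDFReal, id_eq]
      have hexp : -(x - 0)^2/(2*(v:ℝ)) = -(2*(v:ℝ))⁻¹ * x^2 := by
        field_simp
        ring
      rw [hexp]; ring
    rw [heq]
    apply Integrable.const_mul
    have hb : 0 < (2*(v:ℝ))⁻¹ := by positivity
    have h2 := integrable_rpow_mul_exp_neg_mul_sq hb (s := 2) (by norm_num)
    have : (fun x : ℝ => x ^ (2:ℝ) * rexp (-(2*(v:ℝ))⁻¹ * x^2))
        = fun x : ℝ => x ^ 2 * rexp (-(2*(v:ℝ))⁻¹ * x^2) := by
      funext x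
      rw [show ((2:ℝ)) = ((2:ℕ):ℝ) by norm_num, Real.rpow_natCast]
    rwa [this] at h2

lemma integral_id_gaussianReal (v : ℝ≥0) : ∫ x, x ∂(gaussianReal 0 v) = 0 := by
  have hone : (⟨(-1:ℝ)^2, sq_nonneg _⟩ : ℝ≥0) = 1 := by ext; norm_num
  have hneg : (gaussianReal 0 v).map (fun x => -1 * x) = gaussianReal 0 v := by
    rw [gaussianReal_map_const_mul (-1 : ℝ), mul_zero]; congr 1; ext; simp
  have hint : Integrable (fun x : ℝ => x) (gaussianReal 0 v) :=
    (memℒp_two_id_gaussianReal v).integrable one_le_two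
  have h2 : ∫ x, x ∂(gaussianReal 0 v) = ∫ x, -1 * x ∂(gaussianReal 0 v) := by
    conv_lhs => rw [← hneg]
    exact integral_map (f := fun x : ℝ => x) (φ := fun x : ℝ => -1 * x)
      (measurable_const_mul (-1)).aemeasurable aestronglyMeasurable_id
  simp only [neg_one_mul] at h2
  rw [integral_neg] at h2
  linarith

end BMaux

end BMaux

/-- Lebesgue measure restricted to `[0,1]`, modelling `L²([0,1])`. -/
noncomputable def leb01 : Measure ℝ := volume.restrict (Set.Icc (0 : ℝ) 1)

/-- The indicator `𝟙_{[0,t]}` as an element of `L²([0,1])`. -/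
noncomputable def indL2 (t : ℝ) : Lp ℝ 2 leb01 :=
  indicatorConstLp 2 (measurableSet_Icc : MeasurableSet (Set.Icc (0 : ℝ) t))
    (by
      rw [leb01, Measure.restrict_apply measurableSet_Icc]
      exact ((measure_mono Set.inter_subset_right).trans_lt
        (by simp [Real.volume_Icc])).ne) (1 : ℝ)

lemma inner_indL2 {t s : ℝ} (ht : t ∈ Set.Icc (0:ℝ) 1) (hs : s ∈ Set.Icc (0:ℝ) 1) :
    ⟪indL2 t, indL2 s⟫ = min t s := by
  rw [indL2, L2.inner_indicatorConstLp_eq_setIntegral_inner]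
  simp only [RCLike.inner_apply, starRingEnd_apply, star_one, one_mul, mul_one]
  have hcoe : (indL2 s : ℝ → ℝ) =ᵐ[leb01] (Set.Icc (0:ℝ) s).indicator (fun _ => (1:ℝ)) := by
    rw [indL2]; exact indicatorConstLp_coeFn
  rw [setIntegral_congr_ae measurableSet_Icc (hcoe.mono fun x hx _ => hx),
    setIntegral_indicator measurableSet_Icc, setIntegral_const, Set.Icc_inter_Icc, max_self]
  rw [leb01, measureReal_def, Measure.restrict_apply measurableSet_Icc, Set.Icc_inter_Icc, max_self,
    Real.volume_Icc]
  have hmin1 : min (min t s) 1 = min t s := min_eq_left (le_trans (min_le_left _ _) ht.2)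
  rw [hmin1, sub_zero, ENNReal.toReal_ofReal (le_min ht.1 hs.1), smul_eq_mul, mul_one]

lemma norm_indL2_sq {t : ℝ} (ht : t ∈ Set.Icc (0:ℝ) 1) : ‖indL2 t‖^2 = t := by
  rw [← real_inner_self_eq_norm_sq, inner_indL2 ht ht, min_self]

lemma polar_AQ (A Q : Lp ℝ 2 leb01 →L[ℝ] Lp ℝ 2 leb01)
    (hAQ : ∀ h : Lp ℝ 2 leb01, ‖A h‖ ^ 2 + ‖Q h‖ ^ 2 = ‖h‖ ^ 2) (f g : Lp ℝ 2 leb01) :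
    ⟪A f, A g⟫ + ⟪Q f, Q g⟫ = ⟪f, g⟫ := by
  have h1 := hAQ (f + g)
  have h2 := hAQ f
  have h3 := hAQ g
  rw [map_add, map_add, norm_add_sq_real, norm_add_sq_real, norm_add_sq_real] at h1
  linarith

/-- If `‖Ah‖² + ‖Qh‖² = ‖h‖²` for all `h`, and `η, ζ` are the corresponding
integrators driven by independent Brownian motions `w, w'`, then
`w̃(t) = η(t) + ζ(t)` is a standard Brownian motion on `[0,1]`: it is a centered
Gaussian process with covariance `E[w̃(t)w̃(s)] = min(t,s)`. -/
theorem sum_of_integrators_is_brownian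
    {Ω : Type*} [MeasurableSpace Ω] (P : Measure Ω) [IsProbabilityMeasure P]
    (W W' : Lp ℝ 2 leb01 → Ω → ℝ)
    (hWmeas : ∀ f, Measurable (W f)) (hW'meas : ∀ f, Measurable (W' f))
    (hlaw : ∀ f, P.map (W f) = gaussianReal 0 (‖f‖₊ ^ 2))
    (hlaw' : ∀ f, P.map (W' f) = gaussianReal 0 (‖f‖₊ ^ 2))
    (hadd : ∀ f g, W (f + g) =ᵐ[P] fun ω => W f ω + W g ω)
    (hadd' : ∀ f g, W' (f + g) =ᵐ[P] fun ω => W' f ω + W' g ω)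
    (hsmul : ∀ (c : ℝ) (f), W (c • f) =ᵐ[P] fun ω => c * W f ω)
    (hsmul' : ∀ (c : ℝ) (f), W' (c • f) =ᵐ[P] fun ω => c * W' f ω)
    (hcov : ∀ f g, ∫ ω, W f ω * W g ω ∂P = ⟪f, g⟫)
    (hcov' : ∀ f g, ∫ ω, W' f ω * W' g ω ∂P = ⟪f, g⟫)
    (hindep : ∀ f g, IndepFun (W f) (W' g) P)
    (A Q : Lp ℝ 2 leb01 →L[ℝ] Lp ℝ 2 leb01)
    (hAQ : ∀ h : Lp ℝ 2 leb01, ‖A h‖ ^ 2 + ‖Q h‖ ^ 2 = ‖h‖ ^ 2)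
    (η ζ : ℝ → Ω → ℝ)
    (hη : ∀ t, η t = W (A (indL2 t))) (hζ : ∀ t, ζ t = W' (Q (indL2 t))) :
    (∀ t ∈ Set.Icc (0 : ℝ) 1, ∫ ω, (η t ω + ζ t ω) ∂P = 0) ∧
    (∀ t ∈ Set.Icc (0 : ℝ) 1,
      P.map (fun ω => η t ω + ζ t ω) = gaussianReal 0 (Real.toNNReal t)) ∧
    (∀ t ∈ Set.Icc (0 : ℝ) 1, ∀ s ∈ Set.Icc (0 : ℝ) 1,
      ∫ ω, (η t ω + ζ t ω) * (η s ω + ζ s ω) ∂P = min t s) := by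
  have hm2W : ∀ f, MemLp (W f) 2 P := fun f =>
    (memLp_map_measure_iff aestronglyMeasurable_id (hWmeas f).aemeasurable).1
      (by rw [hlaw f]; exact BMaux.memℒp_two_id_gaussianReal _)
  have hm2W' : ∀ f, MemLp (W' f) 2 P := fun f =>
    (memLp_map_measure_iff aestronglyMeasurable_id (hW'meas f).aemeasurable).1
      (by rw [hlaw' f]; exact BMaux.memℒp_two_id_gaussianReal _)
  have hiW : ∀ f, Integrable (W f) P := fun f => (hm2W f).integrable one_le_two
  have hiW' : ∀ f, Integrable (W' f) P := fun f => (hm2W' f).integrable one_le_two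
  have hmeanW : ∀ f, ∫ ω, W f ω ∂P = 0 := fun f => by
    have h := integral_map (μ := P) (φ := W f) (f := fun x : ℝ => x)
      (hWmeas f).aemeasurable aestronglyMeasurable_id
    rw [hlaw f, BMaux.integral_id_gaussianReal] at h
    exact h.symm
  have hmeanW' : ∀ f, ∫ ω, W' f ω ∂P = 0 := fun f => by
    have h := integral_map (μ := P) (φ := W' f) (f := fun x : ℝ => x)
      (hW'meas f).aemeasurable aestronglyMeasurable_id
    rw [hlaw' f, BMaux.integral_id_gaussianReal] at h
    exact h.symm
  have hmul : ∀ (X Y : Ω → ℝ), MemLp X 2 P → MemLp Y 2 P →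
      Integrable (fun ω => X ω * Y ω) P := by
    intro X Y hX hY
    have h111 : (1:ℝ≥0∞)/1 = 1/2 + 1/2 := by
      rw [ENNReal.add_halves, one_div_one]
    have h := memLp_one_iff_integrable.1 (hY.smul hX (r := 1))
    exact h
  refine ⟨?_, ?_, ?_⟩
  · intro t ht
    rw [hη t, hζ t, integral_add (hiW _) (hiW' _), hmeanW, hmeanW', add_zero]
  · intro t ht
    rw [hη t, hζ t, BMaux.map_add_of_gaussian (hWmeas _) (hW'meas _) (hindep _ _)
      (hlaw _) (hlaw' _)]
    congr 1
    apply NNReal.coe_injective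
    push_cast
    rw [hAQ, norm_indL2_sq ht, Real.coe_toNNReal _ ht.1]
  · intro t ht s hs
    rw [hη t, hζ t, hη s, hζ s]
    have i11 := hmul _ _ (hm2W (A (indL2 t))) (hm2W (A (indL2 s)))
    have i12 := hmul _ _ (hm2W (A (indL2 t))) (hm2W' (Q (indL2 s)))
    have i21 := hmul _ _ (hm2W' (Q (indL2 t))) (hm2W (A (indL2 s)))
    have i22 := hmul _ _ (hm2W' (Q (indL2 t))) (hm2W' (Q (indL2 s)))
    have hexp : (fun ω => (W (A (indL2 t)) ω + W' (Q (indL2 t)) ω)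
          * (W (A (indL2 s)) ω + W' (Q (indL2 s)) ω))
        = fun ω => (W (A (indL2 t)) ω * W (A (indL2 s)) ω
            + W (A (indL2 t)) ω * W' (Q (indL2 s)) ω)
          + (W' (Q (indL2 t)) ω * W (A (indL2 s)) ω
            + W' (Q (indL2 t)) ω * W' (Q (indL2 s)) ω) := by
      funext ω; ring
    have i1 : Integrable (fun ω => W (A (indL2 t)) ω * W (A (indL2 s)) ω
        + W (A (indL2 t)) ω * W' (Q (indL2 s)) ω) P := i11.add i12
    have i2 : Integrable (fun ω => W' (Q (indL2 t)) ω * W (A (indL2 s)) ω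
        + W' (Q (indL2 t)) ω * W' (Q (indL2 s)) ω) P := i21.add i22
    rw [hexp, integral_add i1 i2, integral_add i11 i12, integral_add i21 i22]
    have c12 : ∫ ω, W (A (indL2 t)) ω * W' (Q (indL2 s)) ω ∂P = 0 := by
      have e := (hindep (A (indL2 t)) (Q (indL2 s))).integral_mul_eq_mul_integral
        (hWmeas _).aestronglyMeasurable (hW'meas _).aestronglyMeasurable
      simp only [Pi.mul_apply] at e
      rw [e, hmeanW, zero_mul]
    have c21 : ∫ ω, W' (Q (indL2 t)) ω * W (A (indL2 s)) ω ∂P = 0 := by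
      have e := ((hindep (A (indL2 s)) (Q (indL2 t))).symm).integral_mul_eq_mul_integral
        (hW'meas _).aestronglyMeasurable (hWmeas _).aestronglyMeasurable
      simp only [Pi.mul_apply] at e
      rw [e, hmeanW', zero_mul]
    rw [hcov, hcov', c12, c21]
    have hp := polar_AQ A Q hAQ (indL2 t) (indL2 s)
    have hi := inner_indL2 ht hs
    linarith
end
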